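/- arXiv:1806.11459 — 4 statements merged into one kernel-verified Lean document; each statement's English description precedes it below -/
import Mathlib

section
/- Let Σ be a multi-sorted signature with only unary function symbols and equality, and let T be a Σ-theory axiomatized by universal closures of one-variable clauses. If M₁ and M₂ are models of T sharing a common submodel M₀ (with |M₁| ∩ |M₂| = |M₀|), then the structure M with support |M₁| ∪ |M₂|, where each function symbol is interpreted by the union of its interpretations in M₁ and M₂, is a well-defined Σ-structure, is a model of T, and admits M₁ and M₂ as substructures agreeing on M₀. -/
universe u

/-- A multi-sorted signature whose only symbols are unary function symbols
(and equality). -/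
structure UnarySig where
  S : Type
  F : Type
  src : F → S
  tgt : F → S

/-- Composable chains of function symbols = terms in one variable. -/
def UnarySig.IsChain (σ : UnarySig) : σ.S → List σ.F → Prop
  | _, [] => True
  | s, f :: l => σ.src f = s ∧ σ.IsChain (σ.tgt f) l

/-- The sort of the term represented by a chain. -/
def UnarySig.endSort (σ : UnarySig) : σ.S → List σ.F → σ.S
  | s, [] => s
  | _, f :: l => σ.endSort (σ.tgt f) l

/-- An atom in one variable of sort `s`: an equality between two terms. -/
structure UnarySig.Atom (σ : UnarySig) (s : σ.S) where
  t : List σ.F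
  ht : σ.IsChain s t
  u : List σ.F
  hu : σ.IsChain s u
  heq : σ.endSort s t = σ.endSort s u

/-- A one-variable clause `∀x (A₁(x) ∧ ... ∧ Aₙ(x) → B₁(x) ∨ ... ∨ Bₘ(x))`. -/
structure UnarySig.Clause (σ : UnarySig) where
  s : σ.S
  hyps : List (σ.Atom s)
  concls : List (σ.Atom s)

/-- A `Σ`-structure whose supports are subsets `dom s` of ambient sets `U s`
(so that supports of different structures can literally intersect and be
united).  The function interpretations are given as total functions on the
ambient sets under which the supports are closed; only their restrictions to
the supports are meaningful. -/
structure UnarySig.SubStr (σ : UnarySig) (U : σ.S → Type u) where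
  dom : ∀ s : σ.S, Set (U s)
  fI : ∀ f : σ.F, U (σ.src f) → U (σ.tgt f)
  closed : ∀ (f : σ.F) (x : U (σ.src f)), x ∈ dom (σ.src f) → fI f x ∈ dom (σ.tgt f)

/-- Evaluation of a term along given (ambient) function interpretations. -/
def UnarySig.evalFn (σ : UnarySig) {U : σ.S → Type u}
    (fI : ∀ f : σ.F, U (σ.src f) → U (σ.tgt f)) :
    ∀ (s : σ.S) (l : List σ.F), σ.IsChain s l → U s → U (σ.endSort s l)
  | _, [], _, x => x
  | _, f :: l, h, x => σ.evalFn fI (σ.tgt f) l h.2 (fI f (cast (congrArg U h.1.symm) x))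

/-- An atom holds at an element (w.r.t. the structure's functions). -/
def UnarySig.SubStr.Holds {σ : UnarySig} {U : σ.S → Type u} (M : σ.SubStr U) {s : σ.S}
    (A : σ.Atom s) (x : U s) : Prop :=
  cast (congrArg U A.heq) (σ.evalFn M.fI s A.t A.ht x) = σ.evalFn M.fI s A.u A.hu x

/-- Satisfaction of a one-variable clause: the variable ranges over the
support of the structure. -/
def UnarySig.SubStr.SatClause {σ : UnarySig} {U : σ.S → Type u} (M : σ.SubStr U)
    (c : σ.Clause) : Prop :=
  ∀ x ∈ M.dom c.s, (∀ A ∈ c.hyps, M.Holds A x) → ∃ B ∈ c.concls, M.Holds B x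

/-- A structure models a theory of one-variable clauses. -/
def UnarySig.SubStr.Models {σ : UnarySig} {U : σ.S → Type u} (M : σ.SubStr U)
    (T : Set σ.Clause) : Prop :=
  ∀ c ∈ T, M.SatClause c

/-- `A` is a substructure of `B`: the support of `A` is contained in that of
`B` and the functions of `B` restrict to those of `A` on the support of `A`. -/
def UnarySig.SubStr.Sub {σ : UnarySig} {U : σ.S → Type u} (A B : σ.SubStr U) : Prop :=
  (∀ s : σ.S, A.dom s ⊆ B.dom s) ∧
    ∀ (f : σ.F) (x : U (σ.src f)), x ∈ A.dom (σ.src f) → B.fI f x = A.fI f x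

lemma eval_agree (σ : UnarySig) {U : σ.S → Type u}
    (fI gI : ∀ f : σ.F, U (σ.src f) → U (σ.tgt f))
    (dom : ∀ s : σ.S, Set (U s))
    (hcl : ∀ (f : σ.F) (x : U (σ.src f)), x ∈ dom (σ.src f) → gI f x ∈ dom (σ.tgt f))
    (hag : ∀ (f : σ.F) (x : U (σ.src f)), x ∈ dom (σ.src f) → fI f x = gI f x) :
    ∀ (s : σ.S) (l : List σ.F) (h : σ.IsChain s l) (x : U s), x ∈ dom s →
      σ.evalFn fI s l h x = σ.evalFn gI s l h x := by
  intro s l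
  induction l generalizing s with
  | nil => intro _ _ _; rfl
  | cons f t ih =>
    rintro ⟨h1, h2⟩ x hx
    subst h1
    simp only [UnarySig.evalFn, cast_eq]
    rw [hag f x hx]
    exact ih _ h2 _ (hcl f x hx)

/-- **Union amalgam.** Let `T` be a theory axiomatized by universal closures of
one-variable clauses over a unary-function signature.  If `M₁` and `M₂` are
models of `T` sharing the common submodel `M₀` (their supports intersect
exactly in the support of `M₀`), then the union structure — with support
`|M₁| ∪ |M₂|` sortwise and each function interpreted by the union of its
interpretations in `M₁` and `M₂` — is a well-defined `Σ`-structure, is a model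
of `T`, and admits `M₁` and `M₂` as substructures (which in particular agree
on `M₀`). -/
theorem union_amalgam_one_variable_theories (σ : UnarySig) (U : σ.S → Type u)
    (T : Set σ.Clause) (M₀ M₁ M₂ : σ.SubStr U)
    (h₀ : M₀.Models T) (h₁ : M₁.Models T) (h₂ : M₂.Models T)
    (hsub₁ : M₀.Sub M₁) (hsub₂ : M₀.Sub M₂)
    (hint : ∀ s : σ.S, M₁.dom s ∩ M₂.dom s = M₀.dom s) :
    ∃ M : σ.SubStr U,
      (∀ s : σ.S, M.dom s = M₁.dom s ∪ M₂.dom s) ∧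
      (∀ (f : σ.F) (x : U (σ.src f)), x ∈ M₁.dom (σ.src f) → M.fI f x = M₁.fI f x) ∧
      (∀ (f : σ.F) (x : U (σ.src f)), x ∈ M₂.dom (σ.src f) → M.fI f x = M₂.fI f x) ∧
      M.Models T ∧ M₁.Sub M ∧ M₂.Sub M := by
  classical
  set fI : ∀ f : σ.F, U (σ.src f) → U (σ.tgt f) :=
    fun f x => if x ∈ M₁.dom (σ.src f) then M₁.fI f x else M₂.fI f x with hfIdef
  have hf1 : ∀ (f : σ.F) (x : U (σ.src f)), x ∈ M₁.dom (σ.src f) → fI f x = M₁.fI f x :=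
    fun f x hx => if_pos hx
  have hf2 : ∀ (f : σ.F) (x : U (σ.src f)), x ∈ M₂.dom (σ.src f) → fI f x = M₂.fI f x := by
    intro f x hx
    by_cases h : x ∈ M₁.dom (σ.src f)
    · have hx0 : x ∈ M₀.dom (σ.src f) := by rw [← hint]; exact ⟨h, hx⟩
      simp only [hfIdef, if_pos h]
      rw [hsub₁.2 f x hx0, hsub₂.2 f x hx0]
    · simp only [hfIdef, if_neg h]
  have hcl : ∀ (f : σ.F) (x : U (σ.src f)), x ∈ M₁.dom (σ.src f) ∪ M₂.dom (σ.src f) →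
      fI f x ∈ M₁.dom (σ.tgt f) ∪ M₂.dom (σ.tgt f) := by
    intro f x hx
    rcases hx with hx | hx
    · exact Or.inl (hf1 f x hx ▸ M₁.closed f x hx)
    · exact Or.inr (hf2 f x hx ▸ M₂.closed f x hx)
  set M : σ.SubStr U := ⟨fun s => M₁.dom s ∪ M₂.dom s, fI, hcl⟩ with hMdef
  have hev1 : ∀ (s : σ.S) (l : List σ.F) (h : σ.IsChain s l) (x : U s), x ∈ M₁.dom s →
      σ.evalFn fI s l h x = σ.evalFn M₁.fI s l h x :=
    eval_agree σ fI M₁.fI M₁.dom M₁.closed hf1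
  have hev2 : ∀ (s : σ.S) (l : List σ.F) (h : σ.IsChain s l) (x : U s), x ∈ M₂.dom s →
      σ.evalFn fI s l h x = σ.evalFn M₂.fI s l h x :=
    eval_agree σ fI M₂.fI M₂.dom M₂.closed hf2
  have hH1 : ∀ (s : σ.S) (A : σ.Atom s) (x : U s), x ∈ M₁.dom s →
      (M.Holds A x ↔ M₁.Holds A x) := by
    intro s A x hx
    unfold UnarySig.SubStr.Holds
    rw [hev1 s A.t A.ht x hx, hev1 s A.u A.hu x hx]
  have hH2 : ∀ (s : σ.S) (A : σ.Atom s) (x : U s), x ∈ M₂.dom s →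
      (M.Holds A x ↔ M₂.Holds A x) := by
    intro s A x hx
    unfold UnarySig.SubStr.Holds
    rw [hev2 s A.t A.ht x hx, hev2 s A.u A.hu x hx]
  refine ⟨M, fun s => rfl, hf1, hf2, ?_, ?_, ?_⟩
  · intro c hc x hx hhyps
    rcases hx with hx | hx
    · obtain ⟨B, hB, hBh⟩ := h₁ c hc x hx (fun A hA => (hH1 c.s A x hx).mp (hhyps A hA))
      exact ⟨B, hB, (hH1 c.s B x hx).mpr hBh⟩
    · obtain ⟨B, hB, hBh⟩ := h₂ c hc x hx (fun A hA => (hH2 c.s A x hx).mp (hhyps A hA))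
      exact ⟨B, hB, (hH2 c.s B x hx).mpr hBh⟩
  · exact ⟨fun s => Set.subset_union_left, hf1⟩
  · exact ⟨fun s => Set.subset_union_right, hf2⟩
end

section
/- Theories axiomatized by universal one-variable formulae over a unary-function signature have the amalgamation property: for any two embeddings μ₁ : M₀ → M₁ and μ₂ : M₀ → M₂ between models of T, there exist a model M of T and embeddings ν₁ : M₁ → M and ν₂ : M₂ → M with ν₁ ∘ μ₁ = ν₂ ∘ μ₂. -/
universe u

/-- A `Σ`-structure. -/
structure UnarySig.Str (σ : UnarySig) : Type (u + 1) where
  carrier : σ.S → Type u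
  fI : ∀ f : σ.F, carrier (σ.src f) → carrier (σ.tgt f)

/-- Evaluation of a term (composable chain) at an element. -/
def UnarySig.Str.eval {σ : UnarySig} (M : UnarySig.Str.{u} σ) :
    ∀ (s : σ.S) (l : List σ.F), σ.IsChain s l → M.carrier s → M.carrier (σ.endSort s l)
  | _, [], _, x => x
  | _, f :: l, h, x => M.eval (σ.tgt f) l h.2 (M.fI f (cast (congrArg M.carrier h.1.symm) x))

/-- An atom holds at an element. -/
def UnarySig.Str.Holds {σ : UnarySig} (M : UnarySig.Str.{u} σ) {s : σ.S}
    (A : σ.Atom s) (x : M.carrier s) : Prop :=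
  cast (congrArg M.carrier A.heq) (M.eval s A.t A.ht x) = M.eval s A.u A.hu x

/-- A structure satisfies a one-variable clause. -/
def UnarySig.Str.SatClause {σ : UnarySig} (M : UnarySig.Str.{u} σ) (c : σ.Clause) : Prop :=
  ∀ x : M.carrier c.s, (∀ A ∈ c.hyps, M.Holds A x) → ∃ B ∈ c.concls, M.Holds B x

/-- A structure models a theory axiomatized by one-variable clauses. -/
def UnarySig.Str.Models {σ : UnarySig} (M : UnarySig.Str.{u} σ) (T : Set σ.Clause) : Prop :=
  ∀ c ∈ T, M.SatClause c

/-- An embedding of `Σ`-structures: an injective map commuting with the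
function interpretations (this preserves and reflects all atomic formulas,
since equality is the only predicate). -/
structure UnarySig.Emb {σ : UnarySig} (M N : UnarySig.Str.{u} σ) where
  toFun : ∀ s : σ.S, M.carrier s → N.carrier s
  inj : ∀ s : σ.S, Function.Injective (toFun s)
  comm : ∀ (f : σ.F) (x : M.carrier (σ.src f)),
    toFun (σ.tgt f) (M.fI f x) = N.fI f (toFun (σ.src f) x)

namespace Amalg

open UnarySig

variable {σ : UnarySig}

lemma emb_cast {M N : UnarySig.Str.{u} σ} (ν : UnarySig.Emb M N) {s s' : σ.S} (e : s = s')
    (x : M.carrier s) :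
    ν.toFun s' (cast (congrArg M.carrier e) x) = cast (congrArg N.carrier e) (ν.toFun s x) := by
  subst e; rfl

lemma emb_eval {M N : UnarySig.Str.{u} σ} (ν : UnarySig.Emb M N) :
    ∀ (s : σ.S) (l : List σ.F) (h : σ.IsChain s l) (x : M.carrier s),
      N.eval s l h (ν.toFun s x) = ν.toFun _ (M.eval s l h x)
  | _, [], _, _ => rfl
  | s, f :: l, h, x => by
      simp only [UnarySig.Str.eval]
      rw [← emb_cast ν h.1.symm x, ← ν.comm, emb_eval ν (σ.tgt f) l h.2]
      rfl

lemma emb_holds {M N : UnarySig.Str.{u} σ} (ν : UnarySig.Emb M N) {s : σ.S} (A : σ.Atom s)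
    (x : M.carrier s) : N.Holds A (ν.toFun s x) ↔ M.Holds A x := by
  unfold UnarySig.Str.Holds
  rw [emb_eval ν s A.t A.ht x, emb_eval ν s A.u A.hu x, ← emb_cast ν A.heq]
  exact ⟨fun h => ν.inj _ h, fun h => congrArg _ h⟩

section Construction

variable {M₀ M₁ M₂ : UnarySig.Str.{u} σ} (μ₁ : UnarySig.Emb M₀ M₁) (μ₂ : UnarySig.Emb M₀ M₂)

/-- The gluing relation on the disjoint union. -/
def R (s : σ.S) : (M₁.carrier s ⊕ M₂.carrier s) → (M₁.carrier s ⊕ M₂.carrier s) → Prop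
  | .inl a, .inl b => a = b
  | .inl a, .inr b => ∃ x, μ₁.toFun s x = a ∧ μ₂.toFun s x = b
  | .inr a, .inl b => ∃ x, μ₁.toFun s x = b ∧ μ₂.toFun s x = a
  | .inr a, .inr b => a = b

lemma R_equiv (s : σ.S) : Equivalence (R μ₁ μ₂ s) where
  refl x := by cases x <;> rfl
  symm {x y} h := by
    cases x <;> cases y <;> simp only [R] at *
    · exact h.symm
    · exact h
    · exact h
    · exact h.symm
  trans {x y z} h₁ h₂ := by
    cases x with
    | inl a => cases y with
      | inl b => cases z with
        | inl c => exact h₁.trans h₂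
        | inr c =>
          obtain ⟨w, hw1, hw2⟩ := h₂
          exact ⟨w, hw1.trans h₁.symm, hw2⟩
      | inr b => cases z with
        | inl c =>
          obtain ⟨w, hw1, hw2⟩ := h₁
          obtain ⟨w', hw1', hw2'⟩ := h₂
          have : w = w' := μ₂.inj _ (hw2.trans hw2'.symm)
          exact hw1.symm.trans (this ▸ hw1')
        | inr c =>
          obtain ⟨w, hw1, hw2⟩ := h₁
          exact ⟨w, hw1, hw2.trans h₂⟩
    | inr a => cases y with
      | inl b => cases z with
        | inl c =>
          obtain ⟨w, hw1, hw2⟩ := h₁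
          exact ⟨w, hw1.trans h₂, hw2⟩
        | inr c =>
          obtain ⟨w, hw1, hw2⟩ := h₁
          obtain ⟨w', hw1', hw2'⟩ := h₂
          have : w = w' := μ₁.inj _ (hw1.trans hw1'.symm)
          exact hw2.symm.trans (this ▸ hw2')
      | inr b => cases z with
        | inl c =>
          obtain ⟨w, hw1, hw2⟩ := h₂
          exact ⟨w, hw1, hw2.trans h₁.symm⟩
        | inr c => exact h₁.trans h₂

/-- The setoid on each sort. -/
def Sd (s : σ.S) : Setoid (M₁.carrier s ⊕ M₂.carrier s) := ⟨R μ₁ μ₂ s, R_equiv μ₁ μ₂ s⟩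

lemma R_map (f : σ.F) :
    ∀ {x y : M₁.carrier (σ.src f) ⊕ M₂.carrier (σ.src f)}, R μ₁ μ₂ (σ.src f) x y →
      R μ₁ μ₂ (σ.tgt f) (Sum.map (M₁.fI f) (M₂.fI f) x) (Sum.map (M₁.fI f) (M₂.fI f) y) := by
  intro x y h
  cases x <;> cases y <;> simp only [R, Sum.map] at *
  · exact congrArg _ h
  · obtain ⟨a, ha1, ha2⟩ := h
    exact ⟨M₀.fI f a, by rw [μ₁.comm, ha1], by rw [μ₂.comm, ha2]⟩
  · obtain ⟨a, ha1, ha2⟩ := h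
    exact ⟨M₀.fI f a, by rw [μ₁.comm, ha1], by rw [μ₂.comm, ha2]⟩
  · exact congrArg _ h

/-- The amalgam structure. -/
def Am : UnarySig.Str.{u} σ where
  carrier s := Quotient (Sd μ₁ μ₂ s)
  fI f := Quotient.map' (Sum.map (M₁.fI f) (M₂.fI f)) (fun _ _ => R_map μ₁ μ₂ f)

/-- Embedding of `M₁` into the amalgam. -/
def nu1 : UnarySig.Emb M₁ (Am μ₁ μ₂) where
  toFun s x := Quotient.mk (Sd μ₁ μ₂ s) (.inl x)
  inj s a b h := Quotient.exact h
  comm f x := rfl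

/-- Embedding of `M₂` into the amalgam. -/
def nu2 : UnarySig.Emb M₂ (Am μ₁ μ₂) where
  toFun s x := Quotient.mk (Sd μ₁ μ₂ s) (.inr x)
  inj s a b h := Quotient.exact h
  comm f x := rfl

end Construction

end Amalg

/-- **Amalgamation.** A theory `T` axiomatized by universal one-variable
formulae over a unary-function signature has the amalgamation property: for
any embeddings `μ₁ : M₀ → M₁` and `μ₂ : M₀ → M₂` between models of `T` there
are a model `M` of `T` and embeddings `ν₁ : M₁ → M`, `ν₂ : M₂ → M` with
`ν₁ ∘ μ₁ = ν₂ ∘ μ₂`. -/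
theorem amalgamation_one_variable_theories (σ : UnarySig) (T : Set σ.Clause)
    (M₀ M₁ M₂ : UnarySig.Str.{u} σ)
    (h₀ : M₀.Models T) (h₁ : M₁.Models T) (h₂ : M₂.Models T)
    (μ₁ : UnarySig.Emb M₀ M₁) (μ₂ : UnarySig.Emb M₀ M₂) :
    ∃ (M : UnarySig.Str.{u} σ) (_ : M.Models T)
      (ν₁ : UnarySig.Emb M₁ M) (ν₂ : UnarySig.Emb M₂ M),
      ∀ (s : σ.S) (x : M₀.carrier s), ν₁.toFun s (μ₁.toFun s x) = ν₂.toFun s (μ₂.toFun s x) := by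
  refine ⟨Amalg.Am μ₁ μ₂, ?_, Amalg.nu1 μ₁ μ₂, Amalg.nu2 μ₁ μ₂, ?_⟩
  · intro c hc x hx
    induction x using Quotient.inductionOn' with
    | h x =>
      cases x with
      | inl y =>
        have hx' : ∀ A ∈ c.hyps, M₁.Holds A y := fun A hA =>
          (Amalg.emb_holds (Amalg.nu1 μ₁ μ₂) A y).mp (hx A hA)
        obtain ⟨B, hB, hBy⟩ := h₁ c hc y hx'
        exact ⟨B, hB, (Amalg.emb_holds (Amalg.nu1 μ₁ μ₂) B y).mpr hBy⟩
      | inr y =>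
        have hx' : ∀ A ∈ c.hyps, M₂.Holds A y := fun A hA =>
          (Amalg.emb_holds (Amalg.nu2 μ₁ μ₂) A y).mp (hx A hA)
        obtain ⟨B, hB, hBy⟩ := h₂ c hc y hx'
        exact ⟨B, hB, (Amalg.emb_holds (Amalg.nu2 μ₁ μ₂) B y).mpr hBy⟩
  · intro s x
    exact Quotient.sound ⟨x, rfl, rfl⟩
end

section
/- Let Σ̃ be a tree-like multi-sorted signature (all function symbols unary, the sort dependency graph is a tree, no constant symbols). For finite Σ̃-structures M, N, define inductively for a sort S with sons S₁,...,Sₙ (via functions fᵢ : Sᵢ → S) and a ∈ S^M the tuple of multisets M_M(a) = ⟨{M_M(b) : b ∈ S₁^M, f₁^M(b) = a}, ..., {M_M(b) : b ∈ Sₙ^M, fₙ^M(b) = a}⟩, and let M(M) be the multiset {M_M(a) : a ∈ S_r^M} over the root sort S_r. If M(M) ≤ M(N) in the iterated multiset injection order, then M embeds into N. -/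
universe u

/-- Edge relation of the sort dependency graph. -/
def UnarySig.Step (σ : UnarySig) (s s' : σ.S) : Prop :=
  ∃ f : σ.F, σ.src f = s ∧ σ.tgt f = s'

/-- Acyclicity of the sort dependency graph. -/
def UnarySig.Acyclic (σ : UnarySig) : Prop :=
  ∀ s : σ.S, ¬ Relation.TransGen σ.Step s s

/-- The signature is tree-like: the sort graph is acyclic, every sort is the
domain of at most one function symbol, and there is exactly one sort that is
the domain of no function symbol (the root). -/
def UnarySig.TreeLike (σ : UnarySig) : Prop :=
  σ.Acyclic ∧ (∀ f g : σ.F, σ.src f = σ.src g → f = g) ∧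
    ∃! r : σ.S, ∀ f : σ.F, σ.src f ≠ r

/-- `Child s' s`: the sort `s'` is a son of `s` (there is `f : s' → s`). -/
def UnarySig.Child (σ : UnarySig) (s' s : σ.S) : Prop :=
  ∃ f : σ.F, σ.src f = s' ∧ σ.tgt f = s

/-- The injection order between multisets relative to a relation `r`:
`MRel r m n` iff the occurrences of `m` can be injectively matched with
occurrences of `n` (a sub-multiset `n'` of `n` in bijective `r`-relation
with `m`) so that matched pairs are `r`-related. -/
def MRel {α β : Type u} (r : α → β → Prop) (m : Multiset α) (n : Multiset β) : Prop :=
  ∃ n' ≤ n, Multiset.Rel r m n'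

open Classical in
/-- The multiset of `f`-preimages of an element `a` of sort `s = tgt f`:
`{ x ∈ S₁^M : f^M(x) = a }` as a multiset. -/
noncomputable def UnarySig.Str.pre {σ : UnarySig} (M : UnarySig.Str.{u} σ)
    [∀ s : σ.S, Fintype (M.carrier s)] (f : σ.F) {s : σ.S} (h : σ.tgt f = s)
    (a : M.carrier s) : Multiset (M.carrier (σ.src f)) :=
  (Finset.univ.filter fun x : M.carrier (σ.src f) =>
    cast (congrArg M.carrier h) (M.fI f x) = a).val

/-- The comparison `M_M(a) ≤ M_N(b)` of the inductively defined invariants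
`M_M(a) = ⟨{M_M(x) : f₁^M(x) = a}, …, {M_M(x) : fₙ^M(x) = a}⟩` in the iterated
(componentwise) multiset injection order, defined directly by well-founded
recursion on the sort tree: `Inv s a b` holds iff for every son function `f`
into `s`, the multiset of `f`-preimages of `a` is below the multiset of
`f`-preimages of `b` in the multiset injection order relative to `Inv` at the
son sort. -/
noncomputable def UnarySig.Inv (σ : UnarySig) (M N : UnarySig.Str.{u} σ)
    [∀ s : σ.S, Fintype (M.carrier s)] [∀ s : σ.S, Fintype (N.carrier s)]
    (hwf : WellFounded σ.Child) :
    ∀ s : σ.S, M.carrier s → N.carrier s → Prop :=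
  hwf.fix (C := fun s => M.carrier s → N.carrier s → Prop)
    (fun s ih a b => ∀ (f : σ.F) (h : σ.tgt f = s),
      MRel (ih (σ.src f) ⟨f, rfl, h⟩) (M.pre f h a) (N.pre f h b))

section Aux

universe v

/-- Extract an injective choice function from `Multiset.Rel` between
duplicate-free multisets. -/
theorem rel_extract {α β : Type v} {R : α → β → Prop} :
    ∀ {m : Multiset α} {n : Multiset β}, Multiset.Rel R m n → m.Nodup → n.Nodup →
      ∃ p : {a // a ∈ m} → {b // b ∈ n}, Function.Injective p ∧ ∀ a, R a.1 (p a).1 := by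
  classical
  intro m n h
  induction h with
  | zero =>
      intro _ _
      exact ⟨fun a => absurd a.2 (Multiset.notMem_zero _),
        fun a => absurd a.2 (Multiset.notMem_zero _),
        fun a => absurd a.2 (Multiset.notMem_zero _)⟩
  | @cons a b m₀ n₀ hab hrel ih =>
      intro hm hn
      obtain ⟨ham, hm₀⟩ := Multiset.nodup_cons.1 hm
      obtain ⟨hbn, hn₀⟩ := Multiset.nodup_cons.1 hn
      obtain ⟨p₀, hinj, hR⟩ := ih hm₀ hn₀
      refine ⟨fun x => if h : x.1 = a then ⟨b, Multiset.mem_cons_self _ _⟩ else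
        ⟨(p₀ ⟨x.1, (Multiset.mem_cons.1 x.2).resolve_left h⟩).1,
          Multiset.mem_cons_of_mem (p₀ ⟨x.1, (Multiset.mem_cons.1 x.2).resolve_left h⟩).2⟩,
        ?_, ?_⟩
      · intro x y hxy
        have hv := congrArg Subtype.val hxy
        apply Subtype.ext
        by_cases hx : x.1 = a <;> by_cases hy : y.1 = a
        · rw [hx, hy]
        · exfalso
          simp only [dif_pos hx, dif_neg hy] at hv
          exact hbn (hv ▸ (p₀ ⟨y.1, (Multiset.mem_cons.1 y.2).resolve_left hy⟩).2)
        · exfalso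
          simp only [dif_neg hx, dif_pos hy] at hv
          exact hbn (hv.symm ▸ (p₀ ⟨x.1, (Multiset.mem_cons.1 x.2).resolve_left hx⟩).2)
        · simp only [dif_neg hx, dif_neg hy] at hv
          have h1 : p₀ ⟨x.1, (Multiset.mem_cons.1 x.2).resolve_left hx⟩
              = p₀ ⟨y.1, (Multiset.mem_cons.1 y.2).resolve_left hy⟩ :=
            Subtype.ext hv
          exact Subtype.mk_eq_mk.mp (hinj h1)
      · intro x
        by_cases hx : x.1 = a
        · simp only [dif_pos hx]
          rw [hx]; exact hab
        · simp only [dif_neg hx]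
          exact hR ⟨x.1, (Multiset.mem_cons.1 x.2).resolve_left hx⟩

/-- Extract an injective choice function from the multiset injection order
between duplicate-free multisets. -/
theorem mrel_extract {α β : Type v} {R : α → β → Prop} {m : Multiset α} {n : Multiset β}
    (hm : m.Nodup) (hn : n.Nodup) (h : MRel R m n) :
    ∃ p : {a // a ∈ m} → {b // b ∈ n}, Function.Injective p ∧ ∀ a, R a.1 (p a).1 := by
  obtain ⟨n', hn'le, hrel⟩ := h
  obtain ⟨p, hinj, hR⟩ := rel_extract hrel hm (Multiset.nodup_of_le hn'le hn)
  refine ⟨fun a => ⟨(p a).1, Multiset.mem_of_le hn'le (p a).2⟩, ?_, fun a => hR a⟩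
  intro x y hxy
  have hv := congrArg Subtype.val hxy
  exact hinj (Subtype.ext hv)

/-- The parent relation (the reverse of `Child`) is well founded for an
acyclic signature with finitely many sorts. -/
theorem wf_parent {σ : UnarySig} [Fintype σ.S] (hac : σ.Acyclic) :
    WellFounded (fun t s : σ.S => σ.Child s t) := by
  have hirr : IsIrrefl σ.S (Relation.TransGen fun t s : σ.S => σ.Child s t) :=
    ⟨fun s hs => hac s (Relation.transGen_swap.mp hs)⟩
  have hwf : WellFounded (Relation.TransGen fun t s : σ.S => σ.Child s t) :=
    Finite.wellFounded_of_trans_of_irrefl _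
  exact Subrelation.wf (r := Relation.TransGen fun t s : σ.S => σ.Child s t)
    (fun h => Relation.TransGen.single h) hwf

variable {σ : UnarySig} (M N : UnarySig.Str.{u} σ)
  [∀ s : σ.S, Fintype (M.carrier s)] [∀ s : σ.S, Fintype (N.carrier s)]
  (hwf : WellFounded σ.Child)

theorem mem_pre {P : UnarySig.Str.{u} σ} [∀ s : σ.S, Fintype (P.carrier s)] {f : σ.F}
    {a : P.carrier (σ.tgt f)} {x : P.carrier (σ.src f)} :
    x ∈ P.pre f rfl a ↔ P.fI f x = a := by
  simp [UnarySig.Str.pre]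

theorem pre_nodup {P : UnarySig.Str.{u} σ} [∀ s : σ.S, Fintype (P.carrier s)] (f : σ.F)
    {s : σ.S} (h : σ.tgt f = s) (a : P.carrier s) : (P.pre f h a).Nodup :=
  Finset.nodup _

/-- Unfolding of the invariant comparison. -/
theorem inv_iff (s : σ.S) (a : M.carrier s) (b : N.carrier s) :
    σ.Inv M N hwf s a b ↔ ∀ (f : σ.F) (h : σ.tgt f = s),
      MRel (σ.Inv M N hwf (σ.src f)) (M.pre f h a) (N.pre f h b) := by
  unfold UnarySig.Inv
  rw [WellFounded.fix_eq]

/-- Data packaged at each sort: an injective map that respects the invariant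
comparison. -/
def Output (s : σ.S) : Type u :=
  {g : M.carrier s → N.carrier s //
    Function.Injective g ∧ ∀ a, σ.Inv M N hwf s a (g a)}

theorem pfun_ex (f : σ.F) (gp : Output M N hwf (σ.tgt f)) (b : M.carrier (σ.tgt f)) :
    ∃ p : {x // x ∈ M.pre f rfl b} → {y // y ∈ N.pre f rfl (gp.1 b)},
      Function.Injective p ∧ ∀ x, σ.Inv M N hwf (σ.src f) x.1 (p x).1 :=
  mrel_extract (pre_nodup f rfl b) (pre_nodup f rfl (gp.1 b))
    (((inv_iff M N hwf (σ.tgt f) b (gp.1 b)).1 (gp.2.2 b)) f rfl)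

noncomputable def pfun (f : σ.F) (gp : Output M N hwf (σ.tgt f)) (b : M.carrier (σ.tgt f)) :
    {x // x ∈ M.pre f rfl b} → {y // y ∈ N.pre f rfl (gp.1 b)} :=
  (pfun_ex M N hwf f gp b).choose

theorem pfun_spec (f : σ.F) (gp : Output M N hwf (σ.tgt f)) (b : M.carrier (σ.tgt f)) :
    Function.Injective (pfun M N hwf f gp b) ∧
      ∀ x, σ.Inv M N hwf (σ.src f) x.1 (pfun M N hwf f gp b x).1 :=
  (pfun_ex M N hwf f gp b).choose_spec

theorem pfun_congr (f : σ.F) (gp : Output M N hwf (σ.tgt f)) {b b' : M.carrier (σ.tgt f)}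
    (e : b = b') (x : M.carrier (σ.src f)) (hx : x ∈ M.pre f rfl b)
    (hx' : x ∈ M.pre f rfl b') :
    (pfun M N hwf f gp b ⟨x, hx⟩).1 = (pfun M N hwf f gp b' ⟨x, hx'⟩).1 := by
  cases e; rfl

/-- The map constructed at the source sort of `f`, given one at the target. -/
noncomputable def gAt (f : σ.F) (gp : Output M N hwf (σ.tgt f)) :
    M.carrier (σ.src f) → N.carrier (σ.src f) :=
  fun x => (pfun M N hwf f gp (M.fI f x) ⟨x, mem_pre.mpr rfl⟩).1

theorem gAt_comm (f : σ.F) (gp : Output M N hwf (σ.tgt f)) (x : M.carrier (σ.src f)) :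
    N.fI f (gAt M N hwf f gp x) = gp.1 (M.fI f x) :=
  mem_pre.mp (pfun M N hwf f gp (M.fI f x) ⟨x, mem_pre.mpr rfl⟩).2

theorem gAt_inj (f : σ.F) (gp : Output M N hwf (σ.tgt f)) :
    Function.Injective (gAt M N hwf f gp) := by
  intro x y hxy
  have h2 : M.fI f x = M.fI f y := gp.2.1 (by rw [← gAt_comm, ← gAt_comm, hxy])
  have hy' : y ∈ M.pre f rfl (M.fI f x) := mem_pre.mpr h2.symm
  have e : pfun M N hwf f gp (M.fI f x) ⟨y, hy'⟩
      = pfun M N hwf f gp (M.fI f x) ⟨x, mem_pre.mpr rfl⟩ := by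
    apply Subtype.ext
    exact (pfun_congr M N hwf f gp h2 y hy' (mem_pre.mpr rfl)).trans hxy.symm
  have := (pfun_spec M N hwf f gp (M.fI f x)).1 e
  exact (congrArg Subtype.val this).symm

theorem gAt_inv (f : σ.F) (gp : Output M N hwf (σ.tgt f)) (x : M.carrier (σ.src f)) :
    σ.Inv M N hwf (σ.src f) x (gAt M N hwf f gp x) :=
  (pfun_spec M N hwf f gp (M.fI f x)).2 ⟨x, mem_pre.mpr rfl⟩

noncomputable def bodyAt (f : σ.F) (gp : Output M N hwf (σ.tgt f)) :
    Output M N hwf (σ.src f) :=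
  ⟨gAt M N hwf f gp, gAt_inj M N hwf f gp, gAt_inv M N hwf f gp⟩

open Classical in
/-- The (unique) function symbol out of a sort, or a proof that there is none. -/
noncomputable def par' (σ' : UnarySig) (s : σ'.S) :
    {f : σ'.F // σ'.src f = s} ⊕ PLift (∀ f : σ'.F, σ'.src f ≠ s) :=
  if h : ∃ f : σ'.F, σ'.src f = s then Sum.inl ⟨h.choose, h.choose_spec⟩
  else Sum.inr ⟨fun f hf => h ⟨f, hf⟩⟩

theorem par'_eq (σ' : UnarySig) (huniq : ∀ f g : σ'.F, σ'.src f = σ'.src g → f = g)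
    (f : σ'.F) : par' σ' (σ'.src f) = Sum.inl ⟨f, rfl⟩ := by
  unfold par'
  rw [dif_pos ⟨f, rfl⟩]
  exact congrArg Sum.inl (Subtype.ext
    (huniq _ f (Exists.choose_spec (⟨f, rfl⟩ : ∃ f' : σ'.F, σ'.src f' = σ'.src f))))

theorem root_ex (r : σ.S)
    (hle : MRel (σ.Inv M N hwf r)
      (Finset.univ : Finset (M.carrier r)).val
      (Finset.univ : Finset (N.carrier r)).val) :
    ∃ p : {a // a ∈ (Finset.univ : Finset (M.carrier r)).val} →
        {b // b ∈ (Finset.univ : Finset (N.carrier r)).val},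
      Function.Injective p ∧ ∀ a, σ.Inv M N hwf r a.1 (p a).1 :=
  mrel_extract Finset.univ.nodup Finset.univ.nodup hle

noncomputable def rootOutput (htree : σ.TreeLike) (r : σ.S)
    (hroot : ∀ f : σ.F, σ.src f ≠ r)
    (hle : MRel (σ.Inv M N hwf r)
      (Finset.univ : Finset (M.carrier r)).val
      (Finset.univ : Finset (N.carrier r)).val)
    (s : σ.S) (hs : ∀ f : σ.F, σ.src f ≠ s) : Output M N hwf s :=
  have heq : r = s :=
    ((htree.2.2.choose_spec.2 r hroot).trans (htree.2.2.choose_spec.2 s hs).symm)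
  heq ▸ (⟨fun a => ((root_ex M N hwf r hle).choose ⟨a, Finset.mem_univ_val a⟩).1,
    fun x y hxy => by
      have := (root_ex M N hwf r hle).choose_spec.1 (Subtype.ext hxy)
      exact congrArg Subtype.val this,
    fun a => (root_ex M N hwf r hle).choose_spec.2 ⟨a, Finset.mem_univ_val a⟩⟩ :
      Output M N hwf r)

noncomputable def body (htree : σ.TreeLike) (r : σ.S)
    (hroot : ∀ f : σ.F, σ.src f ≠ r)
    (hle : MRel (σ.Inv M N hwf r)
      (Finset.univ : Finset (M.carrier r)).val
      (Finset.univ : Finset (N.carrier r)).val)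
    (s : σ.S) (ih : ∀ t, σ.Child s t → Output M N hwf t) : Output M N hwf s :=
  Sum.elim
    (fun fp : {f : σ.F // σ.src f = s} =>
      fp.2 ▸ bodyAt M N hwf fp.1 (ih (σ.tgt fp.1) ⟨fp.1, fp.2, rfl⟩))
    (fun h => rootOutput M N hwf htree r hroot hle s h.down)
    (par' σ s)

end Aux

/-- **Embedding from comparison of tree invariants.** Let `Σ̃` be a tree-like
signature with root sort `r`.  For finite `Σ̃`-structures `M, N`, if
`M(M) ≤ M(N)` — i.e. the multiset `{M_M(a) : a ∈ S_r^M}` of invariants of the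
root elements of `M` is below `{M_N(b) : b ∈ S_r^N}` in the multiset injection
order — then `M` embeds into `N`. -/
theorem embeds_of_inv_le (σ : UnarySig) [Fintype σ.S] [Fintype σ.F]
    (htree : σ.TreeLike) (hwf : WellFounded σ.Child)
    (M N : UnarySig.Str.{u} σ)
    [∀ s : σ.S, Fintype (M.carrier s)] [∀ s : σ.S, Fintype (N.carrier s)]
    (r : σ.S) (hroot : ∀ f : σ.F, σ.src f ≠ r)
    (hle : MRel (σ.Inv M N hwf r)
      (Finset.univ : Finset (M.carrier r)).val
      (Finset.univ : Finset (N.carrier r)).val) :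
    Nonempty (UnarySig.Emb M N) := by
  have hwf' : WellFounded (fun t s : σ.S => σ.Child s t) := wf_parent htree.1
  set B := body M N hwf htree r hroot hle with hB
  refine ⟨⟨fun s => (hwf'.fix B s).1, fun s => (hwf'.fix B s).2.1, ?_⟩⟩
  intro f x
  show (hwf'.fix B (σ.tgt f)).1 (M.fI f x) = N.fI f ((hwf'.fix B (σ.src f)).1 x)
  conv_rhs => rw [WellFounded.fix_eq]
  rw [hB]
  simp only [body]
  rw [par'_eq σ htree.2.1 f]
  exact (gAt_comm M N hwf f
    (hwf'.fix (body M N hwf htree r hroot hle) (σ.tgt f)) x).symm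
end

section
/- If Σ̃ is a tree-like multi-sorted signature with only unary function symbols and no constant symbols, then the class of finite Σ̃-structures is a well-quasi-order with respect to the embeddability quasi-order. -/
/-!
Every sort is the source of at most one symbol, so the sorts form a forest and the elements of a
structure hang, through iterated symbols, below elements of root sorts. To an element `x` attach
its shape: for each symbol `f` into its sort, the list of the shapes of the `f`-preimages of `x`,
nested deeper than the part of the sort forest below `x`. By Higman's and Dickson's lemmas, shapes
of bounded depth, and then the families (over the sorts) of lists of shapes of all elements, are
well-quasi-ordered. If the family of `M` is dominated by that of `N`, there are injective
shape-dominating maps sort by sort; domination of `x` by `y` yields a shape-dominating injective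
matching of the `f`-preimages of `x` into those of `y`, so the maps can be rebuilt from the roots
downwards so as to commute with the symbols.
-/

universe u

open List Function Relation

theorem List.SublistForall₂.imp {α β : Type*} {R S : α → β → Prop} (hRS : ∀ a b, R a b → S a b)
    {l₁ : List α} {l₂ : List β} (h : SublistForall₂ R l₁ l₂) : SublistForall₂ S l₁ l₂ := by
  obtain ⟨l, hR, hl⟩ := sublistForall₂_iff.1 h
  exact sublistForall₂_iff.2 ⟨l, hR.imp hRS, hl⟩

instance List.SublistForall₂.isPreorder {α : Type*} {r : α → α → Prop} [IsPreorder α r] :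
    IsPreorder (List α) (SublistForall₂ r) where

theorem WellQuasiOrdered.sublistForall₂ {α : Type*} {r : α → α → Prop} [IsPreorder α r]
    (h : WellQuasiOrdered r) : WellQuasiOrdered (SublistForall₂ r) := by
  rw [← Set.partiallyWellOrderedOn_univ_iff] at h ⊢
  simpa using h.partiallyWellOrderedOn_sublistForall₂ r

theorem List.SublistForall₂.exists_injective {α β : Type*} {R : α → β → Prop} {l₁ : List α}
    {l₂ : List β} (h : SublistForall₂ R l₁ l₂) (hl₂ : l₂.Nodup) :
    ∃ φ : {a // a ∈ l₁} → {b // b ∈ l₂}, Injective φ ∧ ∀ a, R a.1 (φ a).1 := by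
  induction h with
  | nil => exact ⟨fun a => absurd a.2 not_mem_nil, fun a => absurd a.2 not_mem_nil,
      fun a => absurd a.2 not_mem_nil⟩
  | @cons a b l₁ l₂ hab _ ih =>
    obtain ⟨φ, hφ, hR⟩ := ih hl₂.of_cons
    have hb : b ∉ l₂ := (nodup_cons.1 hl₂).1
    classical
    -- sending `x` to `b` exactly when `x ∉ l₁` spares a case split on whether `a ∈ l₁`
    refine ⟨fun x => if hx : x.1 ∈ l₁ then ⟨φ ⟨x, hx⟩, mem_cons_of_mem _ (φ _).2⟩
      else ⟨b, mem_cons_self⟩, ?_, ?_⟩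
    · rintro ⟨x, hx⟩ ⟨y, hy⟩ hxy
      by_cases hx' : x ∈ l₁ <;> by_cases hy' : y ∈ l₁ <;> simp only [hx', hy', dite_true,
        dite_false, Subtype.mk.injEq] at hxy
      · exact Subtype.ext (Subtype.mk.inj (hφ (Subtype.ext hxy)))
      · exact absurd (hxy ▸ (φ _).2) hb
      · exact absurd (hxy ▸ (φ _).2) hb
      · simp only [mem_cons, hx', hy', or_false] at hx hy
        exact Subtype.ext (hx.trans hy.symm)
    · rintro ⟨x, hx⟩
      by_cases hx' : x ∈ l₁
      · simpa [hx'] using hR ⟨x, hx'⟩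
      · simp only [mem_cons, hx', or_false] at hx
        subst hx
        simpa [hx'] using hab
  | cons_right _ ih =>
    obtain ⟨φ, hφ, hR⟩ := ih hl₂.of_cons
    exact ⟨fun x => ⟨φ x, mem_cons_of_mem _ (φ x).2⟩,
      fun x y hxy => hφ (Subtype.ext (Subtype.mk.inj hxy)), hR⟩

section FiniteLists

variable {α β A B : Type*} [Finite α] [Finite β]

noncomputable def univList (α : Type*) [Finite α] : List α :=
  Set.finite_univ.toFinset.toList

noncomputable def fiberList (p : α → A) (y : A) : List α :=
  (Set.toFinite {a | p a = y}).toFinset.toList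

theorem mem_univList (a : α) : a ∈ univList α := by
  simp [univList]

theorem nodup_univList : (univList α).Nodup :=
  Finset.nodup_toList _

theorem mem_fiberList {p : α → A} {y : A} {a : α} : a ∈ fiberList p y ↔ p a = y := by
  simp [fiberList]

theorem nodup_fiberList (p : α → A) (y : A) : (fiberList p y).Nodup :=
  Finset.nodup_toList _

theorem exists_injective_of_sublistForall₂_univList {R : α → β → Prop}
    (h : SublistForall₂ R (univList α) (univList β)) :
    ∃ g : α → β, Injective g ∧ ∀ a, R a (g a) := by
  obtain ⟨φ, hφ, hR⟩ := h.exists_injective nodup_univList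
  exact ⟨fun a => φ ⟨a, mem_univList a⟩, fun a a' h =>
    congrArg Subtype.val (hφ (Subtype.ext h)), fun a => hR ⟨a, mem_univList a⟩⟩

theorem exists_injective_lift_of_sublistForall₂_fiberList {p : α → A} {q : β → B} {g : A → B}
    (hg : Injective g) {R : α → β → Prop}
    (h : ∀ y, SublistForall₂ R (fiberList p y) (fiberList q (g y))) :
    ∃ k : α → β, Injective k ∧ (∀ a, q (k a) = g (p a)) ∧ ∀ a, R a (k a) := by
  have hfib (y : A) :
      ∃ φ : {a // p a = y} → {b // q b = g y}, Injective φ ∧ ∀ a, R a.1 (φ a).1 := by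
    obtain ⟨φ, hφ, hR⟩ := (h y).exists_injective (nodup_fiberList q (g y))
    let e₁ : {a // a ∈ fiberList p y} ≃ {a // p a = y} :=
      Equiv.subtypeEquivRight fun _ => mem_fiberList
    let e₂ : {b // b ∈ fiberList q (g y)} ≃ {b // q b = g y} :=
      Equiv.subtypeEquivRight fun _ => mem_fiberList
    exact ⟨e₂ ∘ φ ∘ e₁.symm, e₂.injective.comp (hφ.comp e₁.symm.injective),
      fun a => hR (e₁.symm a)⟩
  choose φ hφ hR using hfib
  refine ⟨Equiv.sigmaFiberEquiv q ∘ Sigma.map g φ ∘ (Equiv.sigmaFiberEquiv p).symm,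
    (Equiv.injective _).comp ((hg.sigma_map hφ).comp (Equiv.injective _)),
    fun a => (φ (p a) ⟨a, rfl⟩).2, fun a => hR (p a) ⟨a, rfl⟩⟩

end FiniteLists

theorem Relation.ncard_transGen_lt {α : Type*} [Finite α] {r : α → α → Prop}
    (hr : ∀ a, ¬ TransGen r a a) {a b : α} (hab : r a b) :
    {c | TransGen r c a}.ncard < {c | TransGen r c b}.ncard := by
  refine Set.ncard_lt_ncard ⟨fun c hc => TransGen.tail hc hab, fun hsub => hr a (hsub ?_)⟩
  exact TransGen.single hab

namespace UnarySig

variable (σ : UnarySig)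

/-- Lists stand in for the paper's finite multisets; `Shape.Le` compares them by Higman's
embedding order. -/
def Shape : ℕ → Type
  | 0 => PUnit
  | n + 1 => σ.F → List (Shape n)

variable {σ}

def Shape.Le : ∀ {n : ℕ}, σ.Shape n → σ.Shape n → Prop
  | 0, _, _ => True
  | _ + 1, a, b => ∀ f, SublistForall₂ Shape.Le (a f) (b f)

instance Shape.isPreorder_le : ∀ n, IsPreorder (σ.Shape n) Shape.Le
  | 0 => { refl := fun _ => trivial, trans := fun _ _ _ _ _ => trivial }
  | n + 1 =>
    have := Shape.isPreorder_le n
    { refl := fun a f => refl_of (SublistForall₂ Shape.Le) (a f)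
      trans := fun _ _ _ hab hbc f => _root_.trans (hab f) (hbc f) }

theorem Shape.wellQuasiOrdered_le [Finite σ.F] : ∀ n, WellQuasiOrdered (@Shape.Le σ n)
  | 0 => fun _ => ⟨0, 1, zero_lt_one, trivial⟩
  | n + 1 => WellQuasiOrdered.pi fun _ => (wellQuasiOrdered_le n).sublistForall₂

variable (σ)

noncomputable def rank (s : σ.S) : ℕ := {t | TransGen σ.Step t s}.ncard

noncomputable def height (s : σ.S) : ℕ := {t | TransGen (flip σ.Step) t s}.ncard

variable {σ}

theorem rank_lt_of_step [Finite σ.S] (hσ : σ.Acyclic) {s t : σ.S} (h : σ.Step s t) :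
    σ.rank s < σ.rank t :=
  ncard_transGen_lt hσ h

theorem height_lt_of_step [Finite σ.S] (hσ : σ.Acyclic) {s t : σ.S} (h : σ.Step s t) :
    σ.height t < σ.height s :=
  ncard_transGen_lt (fun a ha => hσ a (transGen_swap.1 ha)) h

namespace Str

variable {M N : σ.Str} [∀ s, Finite (M.carrier s)] [∀ s, Finite (N.carrier s)]

variable (M) in
open scoped Classical in
noncomputable def shape :
    ∀ (n : ℕ) (s : σ.S), M.carrier s → σ.Shape n
  | 0, _, _ => PUnit.unit
  | n + 1, s, x => fun f =>
    if h : σ.tgt f = s then (fiberList (M.fI f) (h ▸ x)).map (shape n (σ.src f)) else []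

variable (M) in
theorem shape_succ_tgt (n : ℕ) (f : σ.F) (x : M.carrier (σ.tgt f)) :
    M.shape (n + 1) (σ.tgt f) x f = (fiberList (M.fI f) x).map (M.shape n (σ.src f)) := by
  simp [shape]

theorem shape_le_shape_of_succ :
    ∀ {n : ℕ} {s : σ.S} {x : M.carrier s} {y : N.carrier s},
      Shape.Le (M.shape (n + 1) s x) (N.shape (n + 1) s y) →
        Shape.Le (M.shape n s x) (N.shape n s y)
  | 0, _, _, _, _ => trivial
  | n + 1, s, x, y, h => fun f => by
    have hf := h f
    by_cases hfs : σ.tgt f = s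
    · subst hfs
      simp only [shape_succ_tgt, sublistForall₂_map_left_iff,
        sublistForall₂_map_right_iff] at hf ⊢
      exact hf.imp fun _ _ => shape_le_shape_of_succ
    · simp only [shape, dif_neg hfs]
      exact .nil

theorem shape_le_shape_of_le {m n : ℕ} (hmn : m ≤ n) {s : σ.S} {x : M.carrier s}
    {y : N.carrier s} (h : Shape.Le (M.shape n s x) (N.shape n s y)) :
    Shape.Le (M.shape m s x) (N.shape m s y) := by
  induction hmn with
  | refl => exact h
  | step _ ih => exact ih (shape_le_shape_of_succ h)

variable (M N) in
/-- Shapes are compared at depth `rank s + 1`, which exceeds the length of every chain of sorts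
below `s`, so the truncation loses nothing. -/
def ShapeLE (s : σ.S) (x : M.carrier s) (y : N.carrier s) : Prop :=
  Shape.Le (M.shape (σ.rank s + 1) s x) (N.shape (σ.rank s + 1) s y)

theorem sublistForall₂_fiberList_of_shapeLE [Finite σ.S] (hσ : σ.Acyclic) (f : σ.F)
    {x : M.carrier (σ.tgt f)} {y : N.carrier (σ.tgt f)} (h : M.ShapeLE N (σ.tgt f) x y) :
    SublistForall₂ (M.ShapeLE N (σ.src f)) (fiberList (M.fI f) x) (fiberList (N.fI f) y) := by
  have hf := h f
  simp only [shape_succ_tgt, sublistForall₂_map_left_iff, sublistForall₂_map_right_iff] at hf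
  exact hf.imp fun _ _ => shape_le_shape_of_le (rank_lt_of_step hσ ⟨f, rfl, rfl⟩)

variable (M N) in
def ShapeMap (s : σ.S) :=
  {g : M.carrier s → N.carrier s // Injective g ∧ ∀ x, M.ShapeLE N s x (g x)}

theorem exists_shapeMap_lift [Finite σ.S] (hσ : σ.Acyclic) (f : σ.F)
    (g : ShapeMap M N (σ.tgt f)) :
    ∃ k : ShapeMap M N (σ.src f), ∀ x, N.fI f (k.1 x) = g.1 (M.fI f x) := by
  obtain ⟨k, hk, hcomm, hle⟩ := exists_injective_lift_of_sublistForall₂_fiberList g.2.1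
    fun x => sublistForall₂_fiberList_of_shapeLE hσ f (g.2.2 x)
  exact ⟨⟨k, hk, hle⟩, hcomm⟩

namespace ShapeMap

noncomputable def lift [Finite σ.S] (hσ : σ.Acyclic) (f : σ.F) (g : ShapeMap M N (σ.tgt f)) :
    ShapeMap M N (σ.src f) :=
  (exists_shapeMap_lift hσ f g).choose

theorem lift_comm [Finite σ.S] (hσ : σ.Acyclic) (f : σ.F) (g : ShapeMap M N (σ.tgt f))
    (x : M.carrier (σ.src f)) : N.fI f ((g.lift hσ f).1 x) = g.1 (M.fI f x) :=
  (exists_shapeMap_lift hσ f g).choose_spec x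

open scoped Classical in
noncomputable def coherent [Finite σ.S] (hσ : σ.Acyclic) (g : ∀ s, ShapeMap M N s) (s : σ.S) :
    ShapeMap M N s :=
  if h : ∃ f, σ.src f = s then
    h.choose_spec ▸ (coherent hσ g (σ.tgt h.choose)).lift hσ h.choose
  else g s
termination_by σ.height s
decreasing_by exact height_lt_of_step hσ ⟨_, h.choose_spec, rfl⟩

theorem coherent_src [Finite σ.S] (hσ : σ.Acyclic)
    (hout : ∀ f f' : σ.F, σ.src f = σ.src f' → f = f') (g : ∀ s, ShapeMap M N s) (f : σ.F) :
    coherent hσ g (σ.src f) = (coherent hσ g (σ.tgt f)).lift hσ f := by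
  have h : ∃ f', σ.src f' = σ.src f := ⟨f, rfl⟩
  rw [coherent, dif_pos h]
  have key : ∀ f' (e : σ.src f' = σ.src f), f' = f →
      (e ▸ (coherent hσ g (σ.tgt f')).lift hσ f' : ShapeMap M N (σ.src f)) =
        (coherent hσ g (σ.tgt f)).lift hσ f := by
    rintro _ _ rfl
    rfl
  exact key _ _ (hout _ _ h.choose_spec)

end ShapeMap

theorem nonempty_emb_of_shapeMap [Finite σ.S] (hσ : σ.Acyclic)
    (hout : ∀ f f' : σ.F, σ.src f = σ.src f' → f = f') (g : ∀ s, ShapeMap M N s) :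
    Nonempty (Emb M N) :=
  ⟨{ toFun := fun s => (ShapeMap.coherent hσ g s).1
     inj := fun s => (ShapeMap.coherent hσ g s).2.1
     comm := fun f x => by
       rw [ShapeMap.coherent_src hσ hout g f, ShapeMap.lift_comm] }⟩

variable (M) in
noncomputable def profile (s : σ.S) : List (σ.Shape (σ.rank s + 1)) :=
  (univList (M.carrier s)).map (M.shape _ s)

theorem nonempty_emb_of_profile_le [Finite σ.S] (hσ : σ.Acyclic)
    (hout : ∀ f f' : σ.F, σ.src f = σ.src f' → f = f')
    (h : ∀ s, SublistForall₂ Shape.Le (M.profile s) (N.profile s)) : Nonempty (Emb M N) := by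
  have hmap (s : σ.S) :
      ∃ g : M.carrier s → N.carrier s, Injective g ∧ ∀ x, M.ShapeLE N s x (g x) := by
    have hs := h s
    simp only [profile, sublistForall₂_map_left_iff, sublistForall₂_map_right_iff] at hs
    exact exists_injective_of_sublistForall₂_univList hs
  choose g hg using hmap
  exact nonempty_emb_of_shapeMap hσ hout fun s => ⟨g s, hg s⟩

end Str

end UnarySig

/-- **Well-quasi-orderedness of finite structures over tree-like signatures.**
If `Σ̃` is a tree-like multi-sorted signature with only unary function symbols
and no constant symbols, then the finite `Σ̃`-structures form a
well-quasi-order with respect to embeddability: every infinite sequence of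
finite structures contains `i < j` with `Mᵢ` embeddable into `Mⱼ`. -/
theorem finite_structures_wqo_of_treeLike (σ : UnarySig)
    [Fintype σ.S] [Fintype σ.F] (htree : σ.TreeLike)
    (M : ℕ → UnarySig.Str.{u} σ) (hfin : ∀ (n : ℕ) (s : σ.S), Finite ((M n).carrier s)) :
    ∃ i j : ℕ, i < j ∧ Nonempty (UnarySig.Emb (M i) (M j)) := by
  have hwqo : WellQuasiOrdered fun P Q : ∀ s, List (σ.Shape (σ.rank s + 1)) =>
      ∀ s, SublistForall₂ UnarySig.Shape.Le (P s) (Q s) :=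
    WellQuasiOrdered.pi fun _ => (UnarySig.Shape.wellQuasiOrdered_le _).sublistForall₂
  obtain ⟨i, j, hij, hle⟩ := hwqo fun n => (M n).profile
  exact ⟨i, j, hij, UnarySig.Str.nonempty_emb_of_profile_le htree.1 htree.2.1 hle⟩
end
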